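/- Let Q = y + □_{m,q} ⊂ T^ω, where □_{m,q} = (0, 2^{−m})^q × T^{q,ω}, and let S(Q) = Q ∪ ⋃_{j=1}^q τ_j^m(Q) be its sack, where τ_j^m adds 2^{−m} to the j-th coordinate. Then for every point x ∈ S(Q) there exists an interval I_x from the extended Rubio de Francia family ℛ* (a translate of a cube V_{m²} = (0,2^{−m})^m × T^{m,ω} or of a double cube W_{m,r}) such that x ∈ I_x and m(I_x ∩ Q)/m(I_x) ≥ 1/2. -/
import Mathlib


open MeasureTheory Filter Topology Pointwise

/-- The infinite torus `T^ω`, the countable product of circles `T = ℝ/ℤ`. -/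
abbrev Tomega : Type := ℕ → AddCircle (1 : ℝ)

/-- The open arc of the circle `T = ℝ/ℤ` which is the image of the interval `(a, b) ⊂ ℝ`. -/
def arc (a b : ℝ) : Set (AddCircle (1 : ℝ)) :=
  (fun t : ℝ => (t : AddCircle (1 : ℝ))) '' Set.Ioo a b

/-- The subgroup `R_k = {0, 1/k, …, (k-1)/k}` of `k`-th roots of unity in `T = ℝ/ℤ`. -/
noncomputable def Rsub (k : ℕ) : AddSubgroup (AddCircle (1 : ℝ)) :=
  AddSubgroup.zmultiples (((k : ℝ)⁻¹ : ℝ) : AddCircle (1 : ℝ))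

/-- The exponent pattern of the Rubio de Francia construction: for `m = n² + j` with
`1 ≤ j ≤ 2n+1` (so `n = Nat.sqrt (m-1)`), the `i`-th coordinate (0-indexed) of `H_m` is
`R_{2^(rdfExp m i)}` and the `i`-th edge of `V_m` is `(0, 2^{-(rdfExp m i)})`; coordinates
with exponent `0` carry the trivial subgroup `{0}`, resp. the full circle `T`. -/
def rdfExp (m i : ℕ) : ℕ :=
  let n := Nat.sqrt (m - 1)
  let j := m - n ^ 2
  if j ≤ n then (if i < n then n else if i = n then j else 0)
  else (if i < j - n then n + 1 else if i ≤ n then n else 0)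

/-- The finite subgroup `H_m` of `T^ω` of the Rubio de Francia construction. -/
noncomputable def Hgrp (m : ℕ) : AddSubgroup Tomega :=
  AddSubgroup.pi Set.univ fun i => Rsub (2 ^ rdfExp m i)

/-- The fundamental domain `V_m` for `T^ω / H_m` of the Rubio de Francia construction. -/
def Vset (m : ℕ) : Set Tomega :=
  {x | ∀ i, rdfExp m i ≠ 0 → x i ∈ arc 0 ((2 : ℝ) ^ rdfExp m i)⁻¹}

/-- The `(m,q)`-cube `□_{m,q} = (0, 2^{-m})^q × T^{q,ω}` in `T^ω`. -/
def cubeSet (m q : ℕ) : Set Tomega := {x | ∀ i < q, x i ∈ arc 0 ((2 : ℝ) ^ m)⁻¹}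

/-- The element of `T^ω` whose `j`-th coordinate is `2^{-m}` and all other coordinates `0`;
adding it realizes the translation `τ_j^m`. -/
noncomputable def tauPt (m j : ℕ) : Tomega :=
  fun i => if i = j then ((((2 : ℝ) ^ m)⁻¹ : ℝ) : AddCircle (1 : ℝ)) else 0

/-- The sack `S(Q) = Q ∪ ⋃_{j<q} τ_j^m(Q)` of a set `Q` (0-indexed coordinates `j < q`). -/
def sack (m q : ℕ) (Q : Set Tomega) : Set Tomega := Q ∪ ⋃ j < q, tauPt m j +ᵥ Q

/-- The double `(m,m)`-cube `W_{m,r} = □_{m,m} ∪ τ_r^m(□_{m,m})` (0-indexed `r < m`). -/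
def Wcube (m r : ℕ) : Set Tomega := cubeSet m m ∪ (tauPt m r +ᵥ cubeSet m m)

/-- The extended Rubio de Francia basis `ℛ*`: all translates of the fundamental domains
`V_n` together with all translates of the double cubes `W_{m,r}`. -/
def RStar : Set (Set Tomega) :=
  {S | ∃ y : Tomega, ∃ n : ℕ, 1 ≤ n ∧ S = y +ᵥ Vset n} ∪
  {S | ∃ y : Tomega, ∃ m r : ℕ, 2 ≤ m ∧ r < m ∧ S = y +ᵥ Wcube m r}

lemma mem_arc' {t b : ℝ} (h1 : 0 < t) (h2 : t < b) :
    ((t : ℝ) : AddCircle (1:ℝ)) ∈ arc 0 b := ⟨t, ⟨h1, h2⟩, rfl⟩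

lemma isOpen_arc' (a b : ℝ) : IsOpen (arc a b) :=
  QuotientAddGroup.isOpenMap_coe _ isOpen_Ioo

lemma isOpen_cubeSet' (m q : ℕ) : IsOpen (cubeSet m q) := by
  have : cubeSet m q = ⋂ i ∈ Finset.range q,
      (fun x : Tomega => x i) ⁻¹' arc 0 ((2:ℝ)^m)⁻¹ := by
    ext x; simp [cubeSet]
  rw [this]
  exact isOpen_biInter_finset fun i _ => (isOpen_arc' _ _).preimage (continuous_apply i)

lemma cubeSet_nonempty' (m q : ℕ) : (cubeSet m q).Nonempty := by
  refine ⟨fun _ => ((((2:ℝ)^m)⁻¹/2 : ℝ) : AddCircle (1:ℝ)), fun i _ => mem_arc' (by positivity) ?_⟩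
  have : (0:ℝ) < ((2:ℝ)^m)⁻¹ := by positivity
  linarith

lemma sack_aux (μ : Measure Tomega) [μ.IsAddHaarMeasure] [IsProbabilityMeasure μ]
    (m q r : ℕ) (hm : 2 ≤ m) (hrm : r < m) (z y x : Tomega)
    (hxI : x ∈ z +ᵥ Wcube m r)
    (hsub : z +ᵥ cubeSet m m ⊆ y +ᵥ cubeSet m q) :
    ∃ I ∈ RStar, x ∈ I ∧
      (1 : ENNReal) / 2 ≤ μ (I ∩ (y +ᵥ cubeSet m q)) / μ I := by
  refine ⟨z +ᵥ Wcube m r, Or.inr ⟨z, m, r, hm, hrm, rfl⟩, hxI, ?_⟩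
  set I := z +ᵥ Wcube m r with hI
  set κ := μ (cubeSet m m) with hκ
  have hAI : z +ᵥ cubeSet m m ⊆ I := Set.vadd_set_mono Set.subset_union_left
  have hAκ : μ (z +ᵥ cubeSet m m) = κ := measure_vadd μ z _
  have hκ0 : κ ≠ 0 := ((isOpen_cubeSet' m m).measure_pos μ (cubeSet_nonempty' m m)).ne'
  have hI2 : μ I ≤ 2 * κ := by
    have hIeq : I = (z +ᵥ cubeSet m m) ∪ ((z + tauPt m r) +ᵥ cubeSet m m) := by
      rw [hI, Wcube, Set.vadd_set_union, vadd_vadd]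
    rw [hIeq]
    calc μ ((z +ᵥ cubeSet m m) ∪ ((z + tauPt m r) +ᵥ cubeSet m m))
        ≤ μ (z +ᵥ cubeSet m m) + μ ((z + tauPt m r) +ᵥ cubeSet m m) := measure_union_le _ _
      _ = κ + κ := by rw [hAκ, measure_vadd]
      _ = 2 * κ := (two_mul κ).symm
  have hIQ : κ ≤ μ (I ∩ (y +ᵥ cubeSet m q)) := by
    rw [← hAκ]; exact measure_mono (Set.subset_inter hAI hsub)
  have hκI : κ ≤ μ I := hAκ ▸ measure_mono hAI
  have hI0 : μ I ≠ 0 := fun h => hκ0 (le_zero_iff.mp (h ▸ hκI))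
  have hItop : μ I ≠ ⊤ := measure_ne_top μ I
  rw [ENNReal.le_div_iff_mul_le (Or.inl hI0) (Or.inl hItop)]
  calc (1 : ENNReal)/2 * μ I ≤ 1/2 * (2*κ) := mul_le_mul_right hI2 _
    _ = κ := by
        rw [one_div, ← mul_assoc, ENNReal.inv_mul_cancel (by norm_num) (by norm_num), one_mul]
    _ ≤ _ := hIQ

lemma zsub_aux (m q : ℕ) (hqm : q ≤ m) (y x : Tomega) (c2 : AddCircle (1:ℝ)) :
    (fun i => if i < q then y i else x i - c2) +ᵥ cubeSet m m ⊆ y +ᵥ cubeSet m q := by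
  intro a ha
  rw [Set.mem_vadd_set_iff_neg_vadd_mem] at ha ⊢
  intro i hiq
  have := ha i (lt_of_lt_of_le hiq hqm)
  simpa [hiq] using this

/-- **Sack lemma.** Let `Q = y + □_{m,q}` be a translated `(m,q)`-cube and `S(Q)` its sack.
Then for every `x ∈ S(Q)` there is an interval `I_x` of the extended Rubio de Francia family
`ℛ*` with `x ∈ I_x` and `m(I_x ∩ Q)/m(I_x) ≥ 1/2`. -/
theorem sack_lemma (μ : Measure Tomega) [μ.IsAddHaarMeasure] [IsProbabilityMeasure μ]
    (m q : ℕ) (hm : 2 ≤ m) (hq : 1 ≤ q) (hqm : q ≤ m) (y : Tomega) (x : Tomega)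
    (hx : x ∈ y +ᵥ sack m q (cubeSet m q)) :
    ∃ I ∈ RStar, x ∈ I ∧
      (1 : ENNReal) / 2 ≤ μ (I ∩ (y +ᵥ cubeSet m q)) / μ I := by
  have hc : (0:ℝ) < ((2:ℝ)^m)⁻¹ := by positivity
  set c2 : AddCircle (1:ℝ) := ((((2:ℝ)^m)⁻¹/2 : ℝ) : AddCircle (1:ℝ)) with hc2
  set z : Tomega := fun i => if i < q then y i else x i - c2 with hz
  have hc2arc : c2 ∈ arc 0 ((2:ℝ)^m)⁻¹ := mem_arc' (by positivity) (by linarith)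
  rw [Set.mem_vadd_set_iff_neg_vadd_mem] at hx
  rcases hx with h1 | h2
  · refine sack_aux μ m q 0 hm (by omega) z y x ?_ (zsub_aux m q hqm y x c2)
    rw [Set.mem_vadd_set_iff_neg_vadd_mem]
    left
    intro i him
    by_cases hiq : i < q
    · have := h1 i hiq
      simpa [hz, hiq] using this
    · have : (-z +ᵥ x) i = c2 := by
        simp only [hz, vadd_eq_add, Pi.add_apply, Pi.neg_apply, if_neg hiq]
        rw [neg_sub]; exact sub_add_cancel _ _
      rw [this]; exact hc2arc
  · simp only [Set.mem_iUnion] at h2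
    obtain ⟨j, hjq, hmem⟩ := h2
    rw [Set.mem_vadd_set_iff_neg_vadd_mem] at hmem
    refine sack_aux μ m q j hm (lt_of_lt_of_le hjq hqm) z y x ?_ (zsub_aux m q hqm y x c2)
    rw [Set.mem_vadd_set_iff_neg_vadd_mem]
    right
    rw [Set.mem_vadd_set_iff_neg_vadd_mem]
    intro i him
    by_cases hiq : i < q
    · have := hmem i hiq
      simpa [hz, hiq] using this
    · have hij : i ≠ j := by omega
      have : (-tauPt m j +ᵥ (-z +ᵥ x)) i = c2 := by
        simp only [hz, tauPt, vadd_eq_add, Pi.add_apply, Pi.neg_apply, if_neg hij, if_neg hiq,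
          neg_zero, zero_add]
        rw [neg_sub]; exact sub_add_cancel _ _
      rw [this]; exact hc2arc
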